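/- If y is a breakpoint for a function τ: W(T_n) → {a,b} on the butterfly poset, then the other element ȳ of the same rank is also a breakpoint, provided every length-2 interval has a unique rising chain. -/

import Mathlib

open Finset

section ChainDefs
variable {α : Type*} [PartialOrder α]

/-- `l` is a saturated (maximal) chain from `x` to `y`, given as a list. -/
def SatChain (x y : α) (l : List α) : Prop :=
  l.Chain' (· ⋖ ·) ∧ l.head? = some x ∧ l.getLast? = some y

/-- A chain is rising for `τ` (where `true` codes the letter 𝐚 and `false` codes 𝐛)
if every consecutive triple is mapped to 𝐚. -/
def RisingOn (τ : α → α → α → Bool) (l : List α) : Prop :=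
  ∀ (i : ℕ) (h : i + 2 < l.length),
    τ (l.get ⟨i, by omega⟩) (l.get ⟨i + 1, by omega⟩) (l.get ⟨i + 2, by omega⟩) = true

/-- A triple assignment: every non-trivial interval has a unique rising maximal chain. -/
def IsTripleAssignment (τ : α → α → α → Bool) : Prop :=
  ∀ x y : α, x < y → ∃! l : List α, SatChain x y l ∧ RisingOn τ l

/-- An `R`-labeling with label set `Λ` and relation `sim`: every non-trivial interval
has a unique maximal chain whose successive labels are related by `sim`. -/
def IsRLabeling {Λ : Type*} (sim : Λ → Λ → Prop) (lab : α → α → Λ) : Prop :=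
  ∀ x y : α, x < y → ∃! l : List α,
    SatChain x y l ∧ ∀ (i : ℕ) (h : i + 2 < l.length),
      sim (lab (l.get ⟨i, by omega⟩) (l.get ⟨i + 1, by omega⟩))
          (lab (l.get ⟨i + 1, by omega⟩) (l.get ⟨i + 2, by omega⟩))

/-- `y` is a breakpoint for `τ`: the value `τ x y z` does not depend on `x ⋖ y` and `y ⋖ z`. -/
def IsBreakpoint (τ : α → α → α → Bool) (y : α) : Prop :=
  ∃ v : Bool, ∀ x z : α, x ⋖ y → y ⋖ z → τ x y z = v

end ChainDefs

section FlagDefs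
variable {α : Type*} [PartialOrder α] [BoundedOrder α]

/-- `rk` is a rank function making the bounded poset graded. -/
def IsGraded (rk : α → ℕ) : Prop :=
  rk ⊥ = 0 ∧ ∀ x y : α, x ⋖ y → rk y = rk x + 1

/-- Flag `f`-vector entry: the number of chains `0̂ < x₁ < ⋯ < x_k < 1̂`
passing exactly through the ranks in `S`. -/
noncomputable def flagF (rk : α → ℕ) (S : Finset ℕ) : ℕ :=
  Nat.card {c : Finset α // IsChain (· ≤ ·) (↑c : Set α) ∧ c.image rk = S ∧
    c.card = S.card ∧ ∀ x ∈ c, ⊥ < x ∧ x < ⊤}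

/-- Flag `h`-vector entry: `h_S = ∑_{T ⊆ S} (-1)^{|S∖T|} f_T`. -/
noncomputable def flagH (rk : α → ℕ) (S : Finset ℕ) : ℤ :=
  ∑ T ∈ S.powerset, (-1) ^ (S.card - T.card) * (flagF rk T : ℤ)

/-- The descent set of a maximal chain `0̂ = x₀ ⋖ x₁ ⋖ ⋯ ⋖ x_n = 1̂` with respect to `τ`:
those `i` with `τ (x_{i-1}) (x_i) (x_{i+1}) = 𝐛`. -/
def descSet (τ : α → α → α → Bool) (l : List α) : Finset ℕ :=
  (Finset.Icc 1 (l.length - 2)).filter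
    (fun i => τ (l.getD (i - 1) ⊥) (l.getD i ⊥) (l.getD (i + 1) ⊥) = false)

end FlagDefs

/-- The butterfly poset `T_n`: one element at ranks `0` and `n` and two elements
(`side = true/false`) at each rank `1 ≤ i ≤ n-1`; any two elements of distinct
ranks are comparable. -/
structure Butt (n : ℕ) where
  rk : ℕ
  side : Bool
  hle : rk ≤ n
  hb : rk = 0 ∨ rk = n → side = false

theorem Butt.ext' {n : ℕ} {x y : Butt n} (h1 : x.rk = y.rk) (h2 : x.side = y.side) :
    x = y := by
  cases x; cases y; simp_all

instance {n : ℕ} : PartialOrder (Butt n) where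
  le x y := x = y ∨ x.rk < y.rk
  le_refl x := Or.inl rfl
  le_trans x y z hxy hyz := by
    rcases hxy with rfl | h
    · exact hyz
    · rcases hyz with rfl | h'
      · exact Or.inr h
      · exact Or.inr (h.trans h')
  le_antisymm x y hxy hyx := by
    rcases hxy with rfl | h
    · rfl
    · rcases hyx with rfl | h'
      · rfl
      · omega

instance {n : ℕ} : BoundedOrder (Butt n) where
  bot := ⟨0, false, Nat.zero_le n, fun _ => rfl⟩
  top := ⟨n, false, le_refl n, fun _ => rfl⟩
  bot_le x := by
    by_cases h : x.rk = 0
    · exact Or.inl (Butt.ext' h.symm (x.hb (Or.inl h)).symm)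
    · exact Or.inr (by simpa using Nat.pos_of_ne_zero h)
  le_top x := by
    by_cases h : x.rk = n
    · exact Or.inl (Butt.ext' h (x.hb (Or.inr h)))
    · exact Or.inr (lt_of_le_of_ne x.hle h)

/-- The poset `P_n`: two copies (`copy = true/false`) of the butterfly poset `T_n`
glued along their minimum and maximum elements. -/
structure Glue (n : ℕ) where
  rk : ℕ
  side : Bool
  copy : Bool
  hle : rk ≤ n
  hb : rk = 0 ∨ rk = n → side = false ∧ copy = false

theorem Glue.ext' {n : ℕ} {x y : Glue n} (h1 : x.rk = y.rk) (h2 : x.side = y.side)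
    (h3 : x.copy = y.copy) : x = y := by
  cases x; cases y; simp_all

instance {n : ℕ} : PartialOrder (Glue n) where
  le x y := x = y ∨ (x.rk < y.rk ∧ (x.copy = y.copy ∨ x.rk = 0 ∨ y.rk = n))
  le_refl x := Or.inl rfl
  le_trans x y z hxy hyz := by
    rcases hxy with rfl | ⟨h1, h2⟩
    · exact hyz
    · rcases hyz with rfl | ⟨h3, h4⟩
      · exact Or.inr ⟨h1, h2⟩
      · refine Or.inr ⟨h1.trans h3, ?_⟩
        rcases h2 with hc | h0 | hn
        · rcases h4 with hc' | h0' | hn'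
          · exact Or.inl (hc.trans hc')
          · omega
          · exact Or.inr (Or.inr hn')
        · exact Or.inr (Or.inl h0)
        · have := z.hle; omega
  le_antisymm x y hxy hyx := by
    rcases hxy with rfl | ⟨h1, _⟩
    · rfl
    · rcases hyx with rfl | ⟨h2, _⟩
      · rfl
      · omega

instance {n : ℕ} : BoundedOrder (Glue n) where
  bot := ⟨0, false, false, Nat.zero_le n, fun _ => ⟨rfl, rfl⟩⟩
  top := ⟨n, false, false, le_refl n, fun _ => ⟨rfl, rfl⟩⟩
  bot_le x := by
    by_cases h : x.rk = 0
    · exact Or.inl (Glue.ext' h.symm (x.hb (Or.inl h)).1.symm (x.hb (Or.inl h)).2.symm)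
    · exact Or.inr ⟨by simpa using Nat.pos_of_ne_zero h, Or.inr (Or.inl rfl)⟩
  le_top x := by
    by_cases h : x.rk = n
    · exact Or.inl (Glue.ext' h (x.hb (Or.inr h)).1 (x.hb (Or.inr h)).2)
    · exact Or.inr ⟨lt_of_le_of_ne x.hle h, Or.inr (Or.inr rfl)⟩

/-- Eulerian condition (counting form): every non-trivial interval has as many
elements of even rank as of odd rank. -/
def EulerianCount {α : Type*} [PartialOrder α] (rk : α → ℕ) : Prop :=
  ∀ x y : α, x < y →
    Nat.card {z : α // z ∈ Set.Icc x y ∧ Even (rk z - rk x)} =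
    Nat.card {z : α // z ∈ Set.Icc x y ∧ ¬ Even (rk z - rk x)}

section AbIndex

/-- The variable 𝐚 of the non-commutative polynomial ring `ℤ⟨𝐚,𝐛⟩`,
realized as the monoid algebra of the free monoid on two letters. -/
noncomputable def abA : MonoidAlgebra ℤ (FreeMonoid Bool) :=
  MonoidAlgebra.single (FreeMonoid.ofList [true]) 1

/-- The variable 𝐛. -/
noncomputable def abB : MonoidAlgebra ℤ (FreeMonoid Bool) :=
  MonoidAlgebra.single (FreeMonoid.ofList [false]) 1

/-- The 𝐚𝐛-monomial `u_S` of length `n-1`, with 𝐛 in the positions of `S`. -/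
def abMonomial (n : ℕ) (S : Finset ℕ) : FreeMonoid Bool :=
  FreeMonoid.ofList ((List.range (n - 1)).map (fun j => decide ((j + 1) ∉ S)))

/-- The 𝐚𝐛-index `Ψ(P) = ∑_S h_S u_S` of a bounded poset of rank `n`
with rank function `rk`. -/
noncomputable def abIndex {α : Type*} [PartialOrder α] [BoundedOrder α]
    (rk : α → ℕ) (n : ℕ) : MonoidAlgebra ℤ (FreeMonoid Bool) :=
  ∑ S ∈ (Finset.Icc 1 (n - 1)).powerset,
    MonoidAlgebra.single (abMonomial n S) (flagH rk S)

/-- The weight `wt(c)` of a maximal chain, as an 𝐚𝐛-monomial. -/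
def chainWeight {α : Type*} [PartialOrder α] [OrderBot α]
    (τ : α → α → α → Bool) (l : List α) : FreeMonoid Bool :=
  FreeMonoid.ofList ((List.range (l.length - 2)).map
    (fun i => τ (l.getD i ⊥) (l.getD (i + 1) ⊥) (l.getD (i + 2) ⊥)))

end AbIndex

/-!
If `x ⋖ ȳ ⋖ z` in `T_n`, then also `x ⋖ y ⋖ z`, and the interval `[x, z]` is the diamond
`{x, y, ȳ, z}` with the two maximal chains `x ⋖ y ⋖ z` and `x ⋖ ȳ ⋖ z`. Exactly one of them is
rising, so `τ(x, ȳ, z)` is the negation of `τ(x, y, z)`, which does not depend on `x` and `z`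
since `y` is a breakpoint.
-/

theorem risingOn_triple_iff {α : Type*} (τ : α → α → α → Bool) (a b c : α) :
    RisingOn τ [a, b, c] ↔ τ a b c = true := by
  refine ⟨fun h => h 0 (by simp), fun h i hi => ?_⟩
  obtain rfl : i = 0 := by simp at hi; omega
  exact h

section SatChain

variable {α : Type*} [PartialOrder α]

theorem satChain_iff {x z : α} {l : List α} :
    SatChain x z l ↔ l.IsChain (· ⋖ ·) ∧ l.head? = some x ∧ l.getLast? = some z :=
  Iff.rfl

theorem satChain_singleton {x z a : α} : SatChain x z [a] ↔ x = a ∧ z = a := by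
  simp [satChain_iff, eq_comm]

theorem satChain_cons_cons {x z a b : α} {t : List α} :
    SatChain x z (a :: b :: t) ↔ x = a ∧ a ⋖ b ∧ SatChain b z (b :: t) := by
  simp only [satChain_iff, List.isChain_cons_cons, List.head?_cons,
    List.getLast?_cons_cons, Option.some.injEq, eq_comm (a := a)]
  tauto

theorem satChain_triple_iff {x z a m c : α} :
    SatChain x z [a, m, c] ↔ x = a ∧ a ⋖ m ∧ m ⋖ c ∧ z = c := by
  simp only [satChain_cons_cons, satChain_singleton]
  grind

theorem SatChain.rk_add_one {rk : α → ℕ} (hrk : ∀ a b : α, a ⋖ b → rk b = rk a + 1) :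
    ∀ {x z : α} {l : List α}, SatChain x z l → rk z + 1 = rk x + l.length
  | _, _, [], h => by simp [satChain_iff] at h
  | _, _, [_], h => by
    obtain ⟨rfl, rfl⟩ := satChain_singleton.1 h
    rfl
  | _, _, _ :: _ :: _, h => by
    obtain ⟨rfl, hab, htail⟩ := satChain_cons_cons.1 h
    have htail_rk := SatChain.rk_add_one hrk htail
    have hab_rk := hrk _ _ hab
    simp only [List.length_cons] at htail_rk ⊢
    omega

theorem SatChain.eq_triple {rk : α → ℕ} (hrk : ∀ a b : α, a ⋖ b → rk b = rk a + 1)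
    {x z : α} {l : List α} (h : SatChain x z l) (hz : rk z = rk x + 2) :
    ∃ m, x ⋖ m ∧ m ⋖ z ∧ l = [x, m, z] := by
  have hlen : l.length = 3 := by have := h.rk_add_one hrk; omega
  match l, hlen, h with
  | [_, m, _], _, h =>
    obtain ⟨rfl, hxm, hmz, rfl⟩ := satChain_triple_iff.1 h
    exact ⟨m, hxm, hmz, rfl⟩

theorem eq_not_of_existsUnique_risingOn {τ : α → α → α → Bool} {x y y' z : α} (hne : y' ≠ y)
    (hchains : ∀ l, SatChain x z l ↔ l = [x, y, z] ∨ l = [x, y', z])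
    (h : ∃! l, SatChain x z l ∧ RisingOn τ l) : τ x y' z = !τ x y z := by
  obtain ⟨l, ⟨hl, hrise⟩, huniq⟩ := h
  have hrising : ∀ m, (m = y ∨ m = y') → τ x m z = true → [x, m, z] = l := fun m hm hτ =>
    huniq _ ⟨(hchains _).2 (by rcases hm with rfl | rfl <;> simp),
      (risingOn_triple_iff τ x m z).2 hτ⟩
  cases hy : τ x y z <;> cases hy' : τ x y' z
  · rcases (hchains l).1 hl with rfl | rfl <;>
      simp [risingOn_triple_iff, hy, hy'] at hrise
  · rfl
  · rfl
  · have := (hrising y (.inl rfl) hy).trans (hrising y' (.inr rfl) hy').symm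
    simp only [List.cons.injEq, true_and, and_true] at this
    exact absurd this.symm hne

end SatChain

namespace Butt

variable {n : ℕ}

theorem lt_iff {a b : Butt n} : a < b ↔ a.rk < b.rk := by
  refine ⟨fun h => ?_, fun h => lt_of_le_of_ne (Or.inr h) (by rintro rfl; omega)⟩
  rcases h.le with rfl | h'
  · exact absurd h (lt_irrefl _)
  · exact h'

theorem covBy_iff {a b : Butt n} : a ⋖ b ↔ b.rk = a.rk + 1 := by
  refine ⟨fun ⟨hab, hmid⟩ => ?_, fun h => ⟨lt_iff.2 (by omega), fun c hac hcb => ?_⟩⟩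
  · have hlt := lt_iff.1 hab
    by_contra h
    have hb := b.hle
    exact hmid (c := ⟨a.rk + 1, false, by omega, fun _ => rfl⟩) (lt_iff.2 (by simp))
      (lt_iff.2 (by simp; omega))
  · have := lt_iff.1 hac
    have := lt_iff.1 hcb
    omega

theorem eq_or_eq_of_rk_eq {m y ybar : Butt n} (hm : m.rk = y.rk) (hr : ybar.rk = y.rk)
    (hne : ybar ≠ y) : m = y ∨ m = ybar := by
  have hside : ybar.side ≠ y.side := fun h => hne (ext' hr h)
  by_cases hs : m.side = y.side
  · exact .inl (ext' hm hs)
  · refine .inr (ext' (hm.trans hr.symm) ?_)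
    revert hs hside
    cases m.side <;> cases y.side <;> cases ybar.side <;> simp

theorem satChain_iff_of_covBy {x y ybar z : Butt n} (hxy : x ⋖ y) (hyz : y ⋖ z)
    (hr : ybar.rk = y.rk) (hne : ybar ≠ y) (l : List (Butt n)) :
    SatChain x z l ↔ l = [x, y, z] ∨ l = [x, ybar, z] := by
  have hx := covBy_iff.1 hxy
  have hz := covBy_iff.1 hyz
  constructor
  · intro h
    obtain ⟨m, hxm, -, rfl⟩ := h.eq_triple (fun _ _ => covBy_iff.1) (by omega)
    have hm := covBy_iff.1 hxm
    rcases eq_or_eq_of_rk_eq (m := m) (by omega) hr hne with rfl | rfl <;> simp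
  · have hxybar : x ⋖ ybar := covBy_iff.2 (by omega)
    have hybarz : ybar ⋖ z := covBy_iff.2 (by omega)
    rintro (rfl | rfl) <;> simp [satChain_triple_iff, *]

end Butt

theorem butterfly_breakpoint_bar_general (n : ℕ) (τ : Butt n → Butt n → Butt n → Bool)
    (h2 : ∀ x z : Butt n, x < z → z.rk - x.rk = 2 →
      ∃! l : List (Butt n), SatChain x z l ∧ RisingOn τ l)
    (y ybar : Butt n)
    (hr : ybar.rk = y.rk) (hne : ybar ≠ y) (hbp : IsBreakpoint τ y) :
    IsBreakpoint τ ybar := by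
  obtain ⟨v, hv⟩ := hbp
  refine ⟨!v, fun x z hx hz => ?_⟩
  have hxy : x ⋖ y := Butt.covBy_iff.2 (hr ▸ Butt.covBy_iff.1 hx)
  have hyz : y ⋖ z := Butt.covBy_iff.2 (hr ▸ Butt.covBy_iff.1 hz)
  have hrk : z.rk - x.rk = 2 := by
    have := Butt.covBy_iff.1 hxy
    have := Butt.covBy_iff.1 hyz
    omega
  rw [← hv x z hxy hyz]
  exact eq_not_of_existsUnique_risingOn hne (Butt.satChain_iff_of_covBy hxy hyz hr hne)
    (h2 x z (hxy.lt.trans hyz.lt) hrk)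

/-- If `y` is a breakpoint for `τ` on the butterfly poset, and every
length-2 interval has a unique rising chain, then the other element `ȳ` of the same
rank is also a breakpoint. -/
theorem butterfly_breakpoint_bar (n : ℕ) (τ : Butt n → Butt n → Butt n → Bool)
    (h2 : ∀ x z : Butt n, x < z → z.rk - x.rk = 2 →
      ∃! l : List (Butt n), SatChain x z l ∧ RisingOn τ l)
    (y ybar : Butt n) (h0 : ⊥ < y) (h1 : y < ⊤)
    (hr : ybar.rk = y.rk) (hne : ybar ≠ y) (hbp : IsBreakpoint τ y) :
    IsBreakpoint τ ybar :=
  butterfly_breakpoint_bar_general n τ h2 y ybar hr hne hbp
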